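/- arXiv:1107.2351 — 2 statements merged into one kernel-verified Lean document; each statement's English description precedes it below -/
import Mathlib

section
/- Let Ω ⊂ ℝⁿ be a bounded domain with diameter D. Let X be a C² vector field on Ω satisfying ΔX = 2∇_X X − V(x, X(x)) in Ω (componentwise: ΔX^k = 2Σ_j X^j ∂_j X^k − V^k(x, X(x))), where V : Ω × ℝⁿ → ℝⁿ is C¹ and the composite vector field x ↦ V(x, X(x)) satisfies (V(y, X(y)) − V(x, X(x))) · (y − x) ≥ 0 for all x, y ∈ Ω. Let ψ : [0, D/2) → ℝ be C² with ψ(0) = 0, ψ'(s) < 0 for all s, and ψ'' ≤ −2ψ'ψ. Define C(x, y) = (X(y) − X(x)) · (y − x)/|y − x| + 2ψ(|y − x|/2) for x ≠ y in Ω and C(x, x) = 0. Then C cannot attain a negative minimum at an interior point: there is no (x₀, y₀) ∈ Ω × Ω with C(x₀, y₀) < 0 at which C attains a local minimum over Ω × Ω. -/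
/-
At a local minimum `(x₀, y₀)` of `C` with `x₀ ≠ y₀`, put `e = (y₀ - x₀) / |y₀ - x₀|`,
`s = |y₀ - x₀| / 2` and `F = ⟪e, X⟫`. Translating both points by a common vector shows that `DF`
agrees at `x₀` and `y₀` and that `D²F(y₀) - D²F(x₀)` is positive semidefinite, so its trace
`ΔF(y₀) - ΔF(x₀)` dominates its value at `e`, which the symmetric stretch `(x₀ - t e, y₀ + t e)`
bounds below by `-2ψ''(s)`. The equation and the monotonicity of `V` bound `ΔF(y₀) - ΔF(x₀)` above
by `2 DF(y₀)(X y₀ - X x₀)`, and moving `y₀` alone along `X y₀ - X x₀` together with Cauchy–Schwarz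
bounds this by `-2ψ'(s) α`, where `α = ⟪e, X y₀ - X x₀⟫`. Hence `ψ' α ≤ ψ'' ≤ -2ψ'ψ`, that is
`ψ'(s) C(x₀, y₀) ≤ 0`, which is impossible when `ψ' < 0` and `C(x₀, y₀) < 0`.
-/

open scoped RealInnerProductSpace
open Set MeasureTheory

noncomputable def lap {n : ℕ} (f : EuclideanSpace ℝ (Fin n) → ℝ) (x : EuclideanSpace ℝ (Fin n)) : ℝ :=
  ∑ i, fderiv ℝ (fun y => fderiv ℝ f y (EuclideanSpace.single i 1)) x
      (EuclideanSpace.single i 1)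

open Filter Topology Laplacian InnerProductSpace

theorem IsLocalMin.comp_add_smul {E : Type*} [AddCommGroup E] [Module ℝ E] [TopologicalSpace E]
    [ContinuousAdd E] [ContinuousSMul ℝ E] {f : E → ℝ} {x : E} (h : IsLocalMin f x) (v : E) :
    IsLocalMin (fun t : ℝ => f (x + t • v)) 0 :=
  IsLocalMin.comp_continuous (g := fun t : ℝ => x + t • v) (by simpa using h) (by fun_prop)

/-- If `b < 0`, the second-derivative test makes `a` a local maximum as well, so `g` is locally
constant and `b = 0`. -/
theorem IsLocalMin.nonneg_of_hasDerivAt_of_hasDerivAt {g g' : ℝ → ℝ} {a b : ℝ}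
    (hmin : IsLocalMin g a) (hg : ∀ᶠ t in 𝓝 a, HasDerivAt g (g' t) t) (hg' : HasDerivAt g' b a) :
    0 ≤ b := by
  by_contra! hb
  have hderiv : deriv g =ᶠ[𝓝 a] g' := hg.mono fun t ht => ht.deriv
  have hmax : IsLocalMax g a := by
    refine isLocalMax_of_deriv_deriv_neg ?_ ?_ hg.self_of_nhds.continuousAt
    · rwa [(hg'.congr_of_eventuallyEq hderiv).deriv]
    · rw [hderiv.eq_of_nhds]; exact hmin.hasDerivAt_eq_zero hg.self_of_nhds
  have hconst : g =ᶠ[𝓝 a] fun _ => g a :=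
    (hmin.and hmax).mono fun t ht => le_antisymm ht.2 ht.1
  have hzero : g' =ᶠ[𝓝 a] fun _ => 0 := by
    filter_upwards [hconst.eventuallyEq_nhds, hg] with t hct hgt
    exact hgt.unique ((hasDerivAt_const t (g a)).congr_of_eventuallyEq hct)
  exact hb.ne ((hg'.congr_of_eventuallyEq hzero.symm).unique (hasDerivAt_const a 0))

theorem HasDerivAt.norm {E : Type*} [NormedAddCommGroup E] [InnerProductSpace ℝ E]
    {f : ℝ → E} {f' : E} {t : ℝ} (hf : HasDerivAt f f' t) (h0 : f t ≠ 0) :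
    HasDerivAt (fun s => ‖f s‖) (⟪f t, f'⟫ / ‖f t‖) t := by
  have hpos : 0 < ‖f t‖ := norm_pos_iff.2 h0
  have h := hf.norm_sq.sqrt (by positivity)
  simp only [Real.sqrt_sq (norm_nonneg _)] at h
  convert h using 1
  field_simp

section Lines

variable {E : Type*} [NormedAddCommGroup E] [NormedSpace ℝ E] {g : E → ℝ} {x : E}

theorem ContDiffAt.eventually_hasDerivAt_comp_add_smul (hg : ContDiffAt ℝ 2 g x) (v : E) :
    ∀ᶠ t in 𝓝 (0 : ℝ), HasDerivAt (fun t => g (x + t • v)) (fderiv ℝ g (x + t • v) v) t := by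
  have hline : Tendsto (fun t : ℝ => x + t • v) (𝓝 0) (𝓝 x) :=
    (by fun_prop : Continuous fun t : ℝ => x + t • v).tendsto' 0 x (by simp)
  filter_upwards [hline.eventually (hg.eventually (by simp))] with t ht
  exact (ht.differentiableAt (by norm_num)).hasFDerivAt.comp_hasDerivAt t
    (((hasDerivAt_id t).smul_const v).const_add x |>.congr_deriv (one_smul ℝ v))

theorem ContDiffAt.hasDerivAt_fderiv_comp_add_smul (hg : ContDiffAt ℝ 2 g x) (v : E) :
    HasDerivAt (fun t : ℝ => fderiv ℝ g (x + t • v) v) (fderiv ℝ (fderiv ℝ g) x v v) 0 := by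
  have hd : HasFDerivAt (fderiv ℝ g) (fderiv ℝ (fderiv ℝ g) x) (x + (0 : ℝ) • v) := by
    rw [zero_smul, add_zero]
    exact ((hg.fderiv_right (m := 1) (le_refl 2)).differentiableAt (by norm_num)).hasFDerivAt
  have hline : HasDerivAt (fun t : ℝ => x + t • v) v 0 := by
    simpa using ((hasDerivAt_id (0 : ℝ)).smul_const v).const_add x
  have h : HasDerivAt (fun t : ℝ => fderiv ℝ g (x + t • v)) (fderiv ℝ (fderiv ℝ g) x v) 0 :=
    hd.comp_hasDerivAt 0 hline
  simpa using h.clm_apply (hasDerivAt_const (0 : ℝ) v)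

theorem IsLocalMin.firstVariation_eq_zero_and_secondVariation_nonneg {y u v : E} {φ φ' : ℝ → ℝ}
    {φ'' : ℝ} (hgx : ContDiffAt ℝ 2 g x) (hgy : ContDiffAt ℝ 2 g y)
    (hφ : ∀ᶠ t in 𝓝 0, HasDerivAt φ (φ' t) t) (hφ' : HasDerivAt φ' φ'' 0)
    (hmin : IsLocalMin (fun t => g (y + t • u) - g (x + t • v) + φ t) 0) :
    fderiv ℝ g y u - fderiv ℝ g x v + φ' 0 = 0 ∧
      0 ≤ fderiv ℝ (fderiv ℝ g) y u u - fderiv ℝ (fderiv ℝ g) x v v + φ'' := by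
  have hderiv : ∀ᶠ t in 𝓝 0, HasDerivAt (fun t => g (y + t • u) - g (x + t • v) + φ t)
      (fderiv ℝ g (y + t • u) u - fderiv ℝ g (x + t • v) v + φ' t) t := by
    filter_upwards [hgy.eventually_hasDerivAt_comp_add_smul u,
      hgx.eventually_hasDerivAt_comp_add_smul v, hφ] with t hy hx hφt
    exact (hy.sub hx).add hφt
  refine ⟨?_, hmin.nonneg_of_hasDerivAt_of_hasDerivAt hderiv ?_⟩
  · simpa using hmin.hasDerivAt_eq_zero hderiv.self_of_nhds
  · exact ((hgy.hasDerivAt_fderiv_comp_add_smul u).sub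
      (hgx.hasDerivAt_fderiv_comp_add_smul v)).add hφ'

end Lines

theorem IsOpen.dist_lt_diam {E : Type*} [NormedAddCommGroup E] [NormedSpace ℝ E] {Ω : Set E}
    (hΩ : IsOpen Ω) (hbd : Bornology.IsBounded Ω) {x y : E} (hx : x ∈ Ω) (hy : y ∈ Ω)
    (hxy : x ≠ y) : dist x y < Metric.diam Ω := by
  have hline : Tendsto (fun ε : ℝ => y + ε • (y - x)) (𝓝[>] 0) (𝓝 y) :=
    ((by fun_prop : Continuous fun ε : ℝ => y + ε • (y - x)).tendsto' 0 y (by simp)).mono_left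
      nhdsWithin_le_nhds
  obtain ⟨ε, hεΩ, hε⟩ :=
    ((hline.eventually (hΩ.mem_nhds hy)).and self_mem_nhdsWithin).exists
  have hdist : dist x (y + ε • (y - x)) = (1 + ε) * dist x y := by
    rw [dist_eq_norm, dist_eq_norm, show x - (y + ε • (y - x)) = -((1 + ε) • (y - x)) by module,
      norm_neg, norm_smul, norm_sub_rev, Real.norm_of_nonneg (by linarith [hε])]
  have hpos : 0 < dist x y := dist_pos.2 hxy
  have := Metric.dist_le_diam_of_mem hbd hx hεΩ
  nlinarith [hε]

section Laplacian

variable {E : Type*} [NormedAddCommGroup E] [InnerProductSpace ℝ E] [FiniteDimensional ℝ E]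

/-- Complete `e` to an orthonormal basis: every other basis vector contributes a nonnegative
term to the difference of the two Laplacians. -/
theorem fderiv_fderiv_sub_le_laplacian_sub {f : E → ℝ} {x y e : E}
    (hxy : ∀ v, fderiv ℝ (fderiv ℝ f) x v v ≤ fderiv ℝ (fderiv ℝ f) y v v) (he : ‖e‖ = 1) :
    fderiv ℝ (fderiv ℝ f) y e e - fderiv ℝ (fderiv ℝ f) x e e ≤ Δ f y - Δ f x := by
  have hon : Orthonormal ℝ ((↑) : ({e} : Set E) → E) :=
    ⟨fun i => by obtain ⟨_, rfl⟩ := i; exact he,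
      fun i j hij => (hij (Subsingleton.elim i j)).elim⟩
  obtain ⟨u, b, heu, hb⟩ := hon.exists_orthonormalBasis_extension
  simp only [laplacian_eq_iteratedFDeriv_orthonormalBasis f b, iteratedFDeriv_two_apply,
    ← Finset.sum_sub_distrib, hb]
  exact Finset.single_le_sum
    (f := fun i : u => fderiv ℝ (fderiv ℝ f) y i i - fderiv ℝ (fderiv ℝ f) x i i)
    (fun i _ => sub_nonneg.2 (hxy i)) (Finset.mem_univ ⟨e, heu rfl⟩)

theorem ContDiffAt.laplacian_inner_left {F : E → E} {z : E} (hF : ContDiffAt ℝ 2 F z) (e : E) :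
    Δ (fun y => ⟪e, F y⟫) z = ⟪e, Δ F z⟫ :=
  hF.laplacian_CLM_comp_left (l := innerSL ℝ e)

end Laplacian

section Euclidean

variable {n : ℕ}

theorem lap_eq_laplacian {f : EuclideanSpace ℝ (Fin n) → ℝ} {x : EuclideanSpace ℝ (Fin n)}
    (hf : DifferentiableAt ℝ (fderiv ℝ f) x) : lap f x = Δ f x := by
  rw [laplacian_eq_iteratedFDeriv_orthonormalBasis f (EuclideanSpace.basisFun (Fin n) ℝ)]
  refine Finset.sum_congr rfl fun i _ => ?_
  rw [iteratedFDeriv_two_apply, fderiv_clm_apply hf (differentiableAt_const _)]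
  simp

theorem sum_mul_apply_single (L : EuclideanSpace ℝ (Fin n) →L[ℝ] ℝ) (v : EuclideanSpace ℝ (Fin n)) :
    ∑ j, v j * L (EuclideanSpace.single j 1) = L v := by
  conv_rhs => rw [← (EuclideanSpace.basisFun (Fin n) ℝ).sum_repr v]
  simp [map_sum]

theorem laplacian_eq_of_forall_lap {X : EuclideanSpace ℝ (Fin n) → EuclideanSpace ℝ (Fin n)}
    {z W : EuclideanSpace ℝ (Fin n)} (hX : ContDiffAt ℝ 2 X z)
    (heq : ∀ k : Fin n, lap (fun y => X y k) z =
      2 * ∑ j, X z j * fderiv ℝ (fun y => X y k) z (EuclideanSpace.single j 1) - W k) :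
    Δ X z = (2 : ℝ) • fderiv ℝ X z (X z) - W := by
  ext k
  have hXk : ContDiffAt ℝ 2 (fun y => X y k) z :=
    (EuclideanSpace.proj (𝕜 := ℝ) k).contDiff.contDiffAt.comp z hX
  have hfderiv :
      fderiv ℝ (fun y => X y k) z = (EuclideanSpace.proj (𝕜 := ℝ) k).comp (fderiv ℝ X z) :=
    ((EuclideanSpace.proj (𝕜 := ℝ) k).hasFDerivAt.comp z
      (hX.differentiableAt (by norm_num)).hasFDerivAt).fderiv
  have hΔk : Δ X z k = Δ (fun y => X y k) z :=
    (hX.laplacian_CLM_comp_left (l := EuclideanSpace.proj (𝕜 := ℝ) k)).symm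
  rw [hΔk,
    ← lap_eq_laplacian ((hXk.fderiv_right (m := 1) (le_refl 2)).differentiableAt (by norm_num)),
    heq, sum_mul_apply_single, hfderiv]
  simp

end Euclidean

section TwoPoint

variable {E : Type*} [NormedAddCommGroup E] [InnerProductSpace ℝ E]

noncomputable def unitDir (x y : E) : E := ‖y - x‖⁻¹ • (y - x)

/-- The paper's `C(x, y)` for `x ≠ y`. -/
noncomputable def twoPoint (X : E → E) (ψ : ℝ → ℝ) (x y : E) : ℝ :=
  ⟪X y - X x, unitDir x y⟫ + 2 * ψ (‖y - x‖ / 2)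

variable {X : E → E} {ψ : ℝ → ℝ} {x y : E}

theorem norm_unitDir (hxy : x ≠ y) : ‖unitDir x y‖ = 1 :=
  norm_smul_inv_norm (sub_ne_zero.2 hxy.symm)

theorem twoPoint_of_sub_eq_smul {x' y' : E} {c : ℝ} (hc : 0 < c) (h : y' - x' = c • (y - x)) :
    twoPoint X ψ x' y' = ⟪unitDir x y, X y'⟫ - ⟪unitDir x y, X x'⟫ + 2 * ψ (c * ‖y - x‖ / 2) := by
  have hdir : unitDir x' y' = unitDir x y := by
    rw [unitDir, unitDir, h, norm_smul, Real.norm_of_nonneg hc.le, smul_smul, mul_inv,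
      mul_comm c⁻¹, mul_assoc, inv_mul_cancel₀ hc.ne', mul_one]
  rw [twoPoint, hdir, real_inner_comm, inner_sub_right, h, norm_smul, Real.norm_of_nonneg hc.le]

variable (h : IsLocalMin (fun p : E × E => twoPoint X ψ p.1 p.2) (x, y))
include h

theorem IsLocalMin.twoPoint_translate (v : E) :
    IsLocalMin (fun t : ℝ => ⟪unitDir x y, X (y + t • v)⟫ - ⟪unitDir x y, X (x + t • v)⟫
      + 2 * ψ (‖y - x‖ / 2)) 0 := by
  refine (h.comp_add_smul (v, v)).congr (Eventually.of_forall fun t => ?_)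
  simpa using twoPoint_of_sub_eq_smul one_pos (by rw [one_smul]; abel)

theorem IsLocalMin.twoPoint_stretch (hxy : x ≠ y) :
    IsLocalMin (fun t : ℝ => ⟪unitDir x y, X (y + t • unitDir x y)⟫
      - ⟪unitDir x y, X (x + t • -unitDir x y)⟫ + 2 * ψ (‖y - x‖ / 2 + t)) 0 := by
  have hd : 0 < ‖y - x‖ := norm_pos_iff.2 (sub_ne_zero.2 hxy.symm)
  refine (h.comp_add_smul (-unitDir x y, unitDir x y)).congr ?_
  filter_upwards [Ioi_mem_nhds (show -(‖y - x‖ / 2) < 0 by linarith)] with t ht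
  have hc : 0 < 1 + 2 * t / ‖y - x‖ := by
    rw [one_add_div hd.ne']
    exact div_pos (by linarith [mem_Ioi.1 ht]) hd
  have hsub : y + t • unitDir x y - (x + t • -unitDir x y) = (1 + 2 * t / ‖y - x‖) • (y - x) := by
    rw [unitDir, div_eq_mul_inv]
    module
  simp only [Prod.fst_add, Prod.snd_add, Prod.smul_fst, Prod.smul_snd]
  rw [twoPoint_of_sub_eq_smul hc hsub]
  congr 3
  field_simp

/-- First variation in `y` alone, along `X y - X x`. -/
theorem IsLocalMin.twoPoint_fderiv_right_eq (hxy : x ≠ y) (hX : DifferentiableAt ℝ X y) {ψ' : ℝ}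
    (hψ : HasDerivAt ψ ψ' (‖y - x‖ / 2)) :
    ‖y - x‖ * ⟪unitDir x y, fderiv ℝ X y (X y - X x)⟫ =
      ⟪unitDir x y, X y - X x⟫ ^ 2 - ‖X y - X x‖ ^ 2 - ψ' * ‖y - x‖ * ⟪unitDir x y, X y - X x⟫ := by
  have hb : y - x ≠ 0 := sub_ne_zero.2 hxy.symm
  have hd : 0 < ‖y - x‖ := norm_pos_iff.2 hb
  have hbe : y - x = ‖y - x‖ • unitDir x y := by
    rw [unitDir, smul_smul, mul_inv_cancel₀ hd.ne', one_smul]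
  set w := X y - X x with hw
  have hmin : IsLocalMin (fun t : ℝ => twoPoint X ψ x (y + t • w)) 0 := by
    simpa using h.comp_add_smul (0, w)
  have hcurve : HasDerivAt (fun t : ℝ => y + t • w - x) w 0 := by
    simpa using (((hasDerivAt_id (0 : ℝ)).smul_const w).const_add y).sub_const x
  have hnorm : HasDerivAt (fun t : ℝ => ‖y + t • w - x‖) (⟪y - x, w⟫ / ‖y - x‖) 0 := by
    simpa using hcurve.norm (by simpa using hb)
  have hdir : HasDerivAt (fun t : ℝ => ‖y + t • w - x‖⁻¹ • (y + t • w - x))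
      (‖y - x‖⁻¹ • w + (-(⟪y - x, w⟫ / ‖y - x‖) / ‖y - x‖ ^ 2) • (y - x)) 0 := by
    simpa using (hnorm.fun_inv (by simpa using hb)).fun_smul hcurve
  have hXw : HasDerivAt (fun t : ℝ => X (y + t • w) - X x) (fderiv ℝ X y w) 0 := by
    have hline : HasDerivAt (fun t : ℝ => y + t • w) w 0 := by
      simpa using ((hasDerivAt_id (0 : ℝ)).smul_const w).const_add y
    have hX0 : HasFDerivAt X (fderiv ℝ X y) (y + (0 : ℝ) • w) := by simpa using hX.hasFDerivAt
    exact (hX0.comp_hasDerivAt 0 hline).sub_const (X x)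
  have hψw : HasDerivAt (fun t : ℝ => ψ (‖y + t • w - x‖ / 2))
      (ψ' * (⟪y - x, w⟫ / ‖y - x‖ / 2)) 0 := by
    have hψ0 : HasDerivAt ψ ψ' (‖y + (0 : ℝ) • w - x‖ / 2) := by simpa using hψ
    exact hψ0.comp 0 (hnorm.div_const 2)
  have hzero := hmin.hasDerivAt_eq_zero ((hXw.inner ℝ hdir).add (hψw.const_mul 2))
  simp only [zero_smul, add_zero, ← hw] at hzero
  rw [hbe] at hzero
  simp only [inner_add_right, real_inner_smul_right, real_inner_smul_left,
    real_inner_self_eq_norm_sq, norm_smul, norm_unitDir hxy, Real.norm_of_nonneg hd.le, real_inner_comm (unitDir x y)] at hzero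
  field_simp at hzero
  linear_combination hzero

theorem IsLocalMin.twoPoint_fderiv_eq (hXx : ContDiffAt ℝ 2 X x) (hXy : ContDiffAt ℝ 2 X y)
    (u : E) : ⟪unitDir x y, fderiv ℝ X y u⟫ = ⟪unitDir x y, fderiv ℝ X x u⟫ := by
  have hfirst := ((h.twoPoint_translate u).firstVariation_eq_zero_and_secondVariation_nonneg
    (φ' := fun _ => 0) (contDiffAt_const.inner ℝ hXx) (contDiffAt_const.inner ℝ hXy)
    (Eventually.of_forall fun t => hasDerivAt_const t _) (hasDerivAt_const 0 0)).1
  rw [fderiv_inner_apply ℝ (differentiableAt_const _) (hXx.differentiableAt (by norm_num)),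
    fderiv_inner_apply ℝ (differentiableAt_const _) (hXy.differentiableAt (by norm_num))] at hfirst
  simpa [sub_eq_zero] using hfirst

theorem IsLocalMin.twoPoint_laplacian [FiniteDimensional ℝ E] (hxy : x ≠ y)
    (hXx : ContDiffAt ℝ 2 X x) (hXy : ContDiffAt ℝ 2 X y) {ψ' : ℝ → ℝ} {ψ'' : ℝ}
    (hψ : ∀ᶠ r in 𝓝 (‖y - x‖ / 2), HasDerivAt ψ (ψ' r) r) (hψ' : HasDerivAt ψ' ψ'' (‖y - x‖ / 2)) :
    -(2 * ψ'') ≤ ⟪unitDir x y, Δ X y - Δ X x⟫ := by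
  have hFx : ContDiffAt ℝ 2 (fun z => ⟪unitDir x y, X z⟫) x := contDiffAt_const.inner ℝ hXx
  have hFy : ContDiffAt ℝ 2 (fun z => ⟪unitDir x y, X z⟫) y := contDiffAt_const.inner ℝ hXy
  have hhess : ∀ v, fderiv ℝ (fderiv ℝ fun z => ⟪unitDir x y, X z⟫) x v v ≤
      fderiv ℝ (fderiv ℝ fun z => ⟪unitDir x y, X z⟫) y v v := fun v => by
    simpa using ((h.twoPoint_translate v).firstVariation_eq_zero_and_secondVariation_nonneg
      (φ' := fun _ => 0) hFx hFy (Eventually.of_forall fun t => hasDerivAt_const t _)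
      (hasDerivAt_const 0 0)).2
  have hψt : ∀ᶠ t in 𝓝 (0 : ℝ), HasDerivAt (fun t => 2 * ψ (‖y - x‖ / 2 + t))
      (2 * ψ' (‖y - x‖ / 2 + t)) t := by
    have hshift : Tendsto (fun t : ℝ => ‖y - x‖ / 2 + t) (𝓝 0) (𝓝 (‖y - x‖ / 2)) := by
      simpa using (continuous_const_add (‖y - x‖ / 2)).tendsto 0
    filter_upwards [hshift.eventually hψ] with t ht
    exact (ht.comp_const_add _ t).const_mul 2
  have hψ't : HasDerivAt (fun t => 2 * ψ' (‖y - x‖ / 2 + t)) (2 * ψ'') 0 :=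
    ((by simpa using hψ' : HasDerivAt ψ' ψ'' (‖y - x‖ / 2 + 0)).comp_const_add _ 0).const_mul 2
  have hstretch := ((h.twoPoint_stretch hxy).firstVariation_eq_zero_and_secondVariation_nonneg
    hFx hFy hψt hψ't).2
  simp only [map_neg, neg_apply, neg_neg] at hstretch
  have htrace := fderiv_fderiv_sub_le_laplacian_sub hhess (norm_unitDir hxy)
  rw [hXx.laplacian_inner_left, hXy.laplacian_inner_left] at htrace
  rw [inner_sub_right]
  linarith

theorem IsLocalMin.twoPoint_deriv_mul_le [FiniteDimensional ℝ E] (hxy : x ≠ y)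
    (hXx : ContDiffAt ℝ 2 X x) (hXy : ContDiffAt ℝ 2 X y) {a b : E}
    (hΔx : Δ X x = (2 : ℝ) • fderiv ℝ X x (X x) - a)
    (hΔy : Δ X y = (2 : ℝ) • fderiv ℝ X y (X y) - b)
    (hab : 0 ≤ ⟪b - a, y - x⟫) {ψ' : ℝ → ℝ} {ψ'' : ℝ}
    (hψ : ∀ᶠ r in 𝓝 (‖y - x‖ / 2), HasDerivAt ψ (ψ' r) r) (hψ' : HasDerivAt ψ' ψ'' (‖y - x‖ / 2)) :
    ψ' (‖y - x‖ / 2) * ⟪unitDir x y, X y - X x⟫ ≤ ψ'' := by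
  have hd : 0 < ‖y - x‖ := norm_pos_iff.2 (sub_ne_zero.2 hxy.symm)
  have hlap := h.twoPoint_laplacian hxy hXx hXy hψ hψ'
  have hfirst := h.twoPoint_fderiv_eq hXx hXy (X x)
  have hright := h.twoPoint_fderiv_right_eq hxy (hXy.differentiableAt (by norm_num))
    (hψ.self_of_nhds)
  have hba : 0 ≤ ⟪unitDir x y, b - a⟫ := by
    rw [unitDir, real_inner_smul_left, real_inner_comm]
    exact mul_nonneg (inv_nonneg.2 hd.le) hab
  have hCS : ⟪unitDir x y, X y - X x⟫ ^ 2 ≤ ‖X y - X x‖ ^ 2 := by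
    simpa [norm_unitDir hxy, sq] using real_inner_mul_inner_self_le (unitDir x y) (X y - X x)
  have hdrift : ⟪unitDir x y, fderiv ℝ X y (X y - X x)⟫ ≤
      -(ψ' (‖y - x‖ / 2) * ⟪unitDir x y, X y - X x⟫) := by
    refine le_of_mul_le_mul_left ?_ hd
    rw [hright]
    linarith
  rw [hΔx, hΔy] at hlap
  rw [map_sub, inner_sub_right] at hdrift
  simp only [inner_sub_right, real_inner_smul_right] at hlap hba
  linarith

end TwoPoint

theorem stmt_0_general {n : ℕ} (Ω : Set (EuclideanSpace ℝ (Fin n)))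
    (hΩ : IsOpen Ω) (hbd : Bornology.IsBounded Ω)
    (D : ℝ) (hD : Metric.diam Ω = D)
    (X : EuclideanSpace ℝ (Fin n) → EuclideanSpace ℝ (Fin n))
    (V : EuclideanSpace ℝ (Fin n) → EuclideanSpace ℝ (Fin n) → EuclideanSpace ℝ (Fin n))
    (hX : ContDiffOn ℝ 2 X Ω)
    (heq : ∀ x ∈ Ω, ∀ k : Fin n, lap (fun y => X y k) x =
      2 * ∑ j, X x j * fderiv ℝ (fun y => X y k) x (EuclideanSpace.single j 1)
        - V x (X x) k)
    (hVexp : ∀ x ∈ Ω, ∀ y ∈ Ω, 0 ≤ ⟪V y (X y) - V x (X x), y - x⟫)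
    (ψ ψ' ψ'' : ℝ → ℝ)
    (hψd1 : ∀ s ∈ Ico (0:ℝ) (D/2), HasDerivWithinAt ψ (ψ' s) (Ico (0:ℝ) (D/2)) s)
    (hψd2 : ∀ s ∈ Ico (0:ℝ) (D/2), HasDerivWithinAt ψ' (ψ'' s) (Ico (0:ℝ) (D/2)) s)
    (hψneg : ∀ s ∈ Ico (0:ℝ) (D/2), ψ' s < 0)
    (hODE : ∀ s ∈ Ico (0:ℝ) (D/2), ψ'' s ≤ -2 * ψ' s * ψ s)
    (C : EuclideanSpace ℝ (Fin n) → EuclideanSpace ℝ (Fin n) → ℝ)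
    (hCdiag : ∀ x, C x x = 0)
    (hC : ∀ x y, x ≠ y → C x y =
      ⟪X y - X x, ‖y - x‖⁻¹ • (y - x)⟫ + 2 * ψ (‖y - x‖ / 2)) :
    ¬ ∃ x₀ ∈ Ω, ∃ y₀ ∈ Ω, C x₀ y₀ < 0 ∧
      IsLocalMinOn (fun p : EuclideanSpace ℝ (Fin n) × EuclideanSpace ℝ (Fin n) => C p.1 p.2) (Ω ×ˢ Ω) (x₀, y₀) := by
  rintro ⟨x₀, hx₀, y₀, hy₀, hneg, hmin⟩
  have hne : x₀ ≠ y₀ := by rintro rfl; exact hneg.ne (hCdiag x₀)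
  have hloc : IsLocalMin (fun p => twoPoint X ψ p.1 p.2) (x₀, y₀) := by
    refine (hmin.isLocalMin ((hΩ.prod hΩ).mem_nhds ⟨hx₀, hy₀⟩)).congr ?_
    filter_upwards [(isOpen_ne_fun continuous_fst continuous_snd).mem_nhds hne] with p hp
    exact hC p.1 p.2 hp
  have hd : 0 < ‖y₀ - x₀‖ := norm_pos_iff.2 (sub_ne_zero.2 hne.symm)
  have hs : ‖y₀ - x₀‖ / 2 ∈ Ioo 0 (D / 2) := by
    have := hΩ.dist_lt_diam hbd hx₀ hy₀ hne
    rw [dist_comm, dist_eq_norm, hD] at this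
    constructor <;> linarith
  have hsI : ‖y₀ - x₀‖ / 2 ∈ Ico 0 (D / 2) := Ioo_subset_Ico_self hs
  have hψ : ∀ r ∈ Ioo 0 (D / 2), HasDerivAt ψ (ψ' r) r := fun r hr =>
    (hψd1 r (Ioo_subset_Ico_self hr)).hasDerivAt (Ico_mem_nhds hr.1 hr.2)
  have hXz : ∀ z ∈ Ω, ContDiffAt ℝ 2 X z := fun z hz => hX.contDiffAt (hΩ.mem_nhds hz)
  have hkey := hloc.twoPoint_deriv_mul_le hne (hXz x₀ hx₀) (hXz y₀ hy₀)
    (laplacian_eq_of_forall_lap (hXz x₀ hx₀) (heq x₀ hx₀))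
    (laplacian_eq_of_forall_lap (hXz y₀ hy₀) (heq y₀ hy₀)) (hVexp x₀ hx₀ y₀ hy₀)
    (eventually_of_mem (Ioo_mem_nhds hs.1 hs.2) hψ)
    ((hψd2 _ hsI).hasDerivAt (Ico_mem_nhds hs.1 hs.2))
  have hpos := mul_pos_of_neg_of_neg (hψneg _ hsI) hneg
  rw [hC _ _ hne, real_inner_comm, mul_add] at hpos
  unfold unitDir at hkey
  linarith [hODE _ hsI]

theorem stmt_0 {n : ℕ} (Ω : Set (EuclideanSpace ℝ (Fin n)))
    (hΩ : IsOpen Ω) (hconn : IsConnected Ω) (hbd : Bornology.IsBounded Ω)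
    (D : ℝ) (hD : Metric.diam Ω = D)
    (X : EuclideanSpace ℝ (Fin n) → EuclideanSpace ℝ (Fin n))
    (V : EuclideanSpace ℝ (Fin n) → EuclideanSpace ℝ (Fin n) → EuclideanSpace ℝ (Fin n))
    (hX : ContDiffOn ℝ 2 X Ω)
    (hV : ContDiffOn ℝ 1 (fun p : EuclideanSpace ℝ (Fin n) × EuclideanSpace ℝ (Fin n) => V p.1 p.2) (Ω ×ˢ univ))
    (heq : ∀ x ∈ Ω, ∀ k : Fin n, lap (fun y => X y k) x =
      2 * ∑ j, X x j * fderiv ℝ (fun y => X y k) x (EuclideanSpace.single j 1)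
        - V x (X x) k)
    (hVexp : ∀ x ∈ Ω, ∀ y ∈ Ω, 0 ≤ ⟪V y (X y) - V x (X x), y - x⟫)
    (ψ ψ' ψ'' : ℝ → ℝ)
    (hψ0 : ψ 0 = 0)
    (hψd1 : ∀ s ∈ Ico (0:ℝ) (D/2), HasDerivWithinAt ψ (ψ' s) (Ico (0:ℝ) (D/2)) s)
    (hψd2 : ∀ s ∈ Ico (0:ℝ) (D/2), HasDerivWithinAt ψ' (ψ'' s) (Ico (0:ℝ) (D/2)) s)
    (hψc : ContinuousOn ψ'' (Ico (0:ℝ) (D/2)))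
    (hψneg : ∀ s ∈ Ico (0:ℝ) (D/2), ψ' s < 0)
    (hODE : ∀ s ∈ Ico (0:ℝ) (D/2), ψ'' s ≤ -2 * ψ' s * ψ s)
    (C : EuclideanSpace ℝ (Fin n) → EuclideanSpace ℝ (Fin n) → ℝ)
    (hCdiag : ∀ x, C x x = 0)
    (hC : ∀ x y, x ≠ y → C x y =
      ⟪X y - X x, ‖y - x‖⁻¹ • (y - x)⟫ + 2 * ψ (‖y - x‖ / 2)) :
    ¬ ∃ x₀ ∈ Ω, ∃ y₀ ∈ Ω, C x₀ y₀ < 0 ∧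
      IsLocalMinOn (fun p : EuclideanSpace ℝ (Fin n) × EuclideanSpace ℝ (Fin n) => C p.1 p.2) (Ω ×ˢ Ω) (x₀, y₀) :=
  stmt_0_general Ω hΩ hbd D hD X V hX heq hVexp ψ ψ' ψ'' hψd1 hψd2 hψneg hODE C hCdiag hC
end

section
/- Let Ω ⊂ ℝⁿ be a bounded open set, let φ₀ be C² on the closure of Ω with ‖φ₀‖_{C²(closure Ω)} ≤ A/2, and let δ₀, θ₁, θ₂ > 0 be such that |∇φ₀| ≥ θ₁ on the set {x ∈ Ω : φ₀(x) ≤ δ₀} and, for every 0 < δ ≤ δ₀, the level hypersurface {φ₀ = δ} is smooth with second fundamental form II (with respect to the normal −∇φ₀/|∇φ₀|) satisfying II ≥ θ₂ I, where I is the induced metric. Then for every point x with 0 < φ₀(x) ≤ δ₀ and every unit vector W, decomposed as W = W^T + W^⊥ with W^T tangent to the level hypersurface of φ₀ through x and W^⊥ normal to it, one has ∇²φ₀(W, W) ≤ −(θ₁θ₂/2)|W^T|² + C₁|W^⊥|², where C₁ = (A²/(θ₁θ₂) + A)/2. -/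
open scoped RealInnerProductSpace
open Set MeasureTheory

/-!
Split `W = Wᵀ + W^⊥` and expand the Hessian bilinearly. The tangential term is at most
`-θ₁θ₂|Wᵀ|²` by the convexity of the level sets and the gradient bound, and the `C²` bound
controls the other three terms by `A|Wᵀ||W^⊥| + (A/2)|W^⊥|²`. Absorbing the mixed term by
AM-GM, `A|Wᵀ||W^⊥| ≤ (θ₁θ₂/2)|Wᵀ|² + A²/(2θ₁θ₂)|W^⊥|²`, gives the estimate.
-/

theorem fderiv_fderiv_apply_eq {𝕜 E F : Type*} [NontriviallyNormedField 𝕜]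
    [NormedAddCommGroup E] [NormedSpace 𝕜 E] [NormedAddCommGroup F] [NormedSpace 𝕜 F]
    {f : E → F} {x : E} (hf : DifferentiableAt 𝕜 (fderiv 𝕜 f) x) (v u : E) :
    fderiv 𝕜 (fun y => fderiv 𝕜 f y v) x u = fderiv 𝕜 (fderiv 𝕜 f) x u v := by
  rw [fderiv_clm_apply hf (differentiableAt_const v)]
  simp

theorem mul_le_half_mul_sq_add (a κ s t : ℝ) (hκ : 0 < κ) :
    a * s * t ≤ κ / 2 * s ^ 2 + a ^ 2 / (2 * κ) * t ^ 2 := by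
  have h : 0 ≤ (κ * s - a * t) ^ 2 / (2 * κ) := by positivity
  have expand : (κ * s - a * t) ^ 2 / (2 * κ) =
      κ / 2 * s ^ 2 + a ^ 2 / (2 * κ) * t ^ 2 - a * s * t := by
    field_simp; ring
  linarith

theorem ContinuousLinearMap.apply_add_add_le {E : Type*} [SeminormedAddCommGroup E]
    [NormedSpace ℝ E] (B : E →L[ℝ] E →L[ℝ] ℝ) {κ M : ℝ} (hκ : 0 < κ) {t p : E}
    (ht : B t t ≤ -κ * ‖t‖ ^ 2) (hM : ∀ u v, |B u v| ≤ M * ‖u‖ * ‖v‖) :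
    B (t + p) (t + p) ≤ -(κ / 2) * ‖t‖ ^ 2 + (2 * M ^ 2 / κ + M) * ‖p‖ ^ 2 := by
  have htp := le_of_abs_le (hM t p)
  have hpt := le_of_abs_le (hM p t)
  have hpp := le_of_abs_le (hM p p)
  have amgm := mul_le_half_mul_sq_add (2 * M) κ ‖t‖ ‖p‖ hκ
  calc B (t + p) (t + p) = B t t + B t p + B p t + B p p := by
        simp only [map_add, _root_.add_apply]; ring
    _ ≤ -κ * ‖t‖ ^ 2 + 2 * M * ‖t‖ * ‖p‖ + M * ‖p‖ ^ 2 := by linarith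
    _ ≤ -(κ / 2) * ‖t‖ ^ 2 + (2 * M ^ 2 / κ + M) * ‖p‖ ^ 2 := by
        rw [show (2 * M) ^ 2 / (2 * κ) = 2 * M ^ 2 / κ by field_simp] at amgm
        linarith

theorem stmt_18_general {n : ℕ} (Ω : Set (EuclideanSpace ℝ (Fin n)))
    (hΩ : IsOpen Ω)
    (φ₀ : EuclideanSpace ℝ (Fin n) → ℝ) (A δ₀ θ₁ θ₂ : ℝ)
    (hθ₁ : 0 < θ₁) (hθ₂ : 0 < θ₂)
    (hφC : ContDiffOn ℝ 2 φ₀ (closure Ω))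
    (hC2 : ∀ x ∈ Ω, |φ₀ x| ≤ A / 2 ∧ ‖gradient φ₀ x‖ ≤ A / 2 ∧
      ∀ v u : EuclideanSpace ℝ (Fin n), |fderiv ℝ (fun y => fderiv ℝ φ₀ y v) x u| ≤ A / 2 * ‖v‖ * ‖u‖)
    (hgrad : ∀ x ∈ Ω, φ₀ x ≤ δ₀ → θ₁ ≤ ‖gradient φ₀ x‖)
    (hII : ∀ x ∈ Ω, 0 < φ₀ x → φ₀ x ≤ δ₀ → ∀ v : EuclideanSpace ℝ (Fin n),
      ⟪gradient φ₀ x, v⟫ = 0 →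
      fderiv ℝ (fun y => fderiv ℝ φ₀ y v) x v ≤ -θ₂ * ‖gradient φ₀ x‖ * ‖v‖ ^ 2) :
    ∀ x ∈ Ω, 0 < φ₀ x → φ₀ x ≤ δ₀ →
      ∀ W Wt Wp : EuclideanSpace ℝ (Fin n), ‖W‖ = 1 → W = Wt + Wp →
        ⟪gradient φ₀ x, Wt⟫ = 0 → (∃ c : ℝ, Wp = c • gradient φ₀ x) →
        fderiv ℝ (fun y => fderiv ℝ φ₀ y W) x W ≤
          -(θ₁ * θ₂ / 2) * ‖Wt‖ ^ 2 + ((A ^ 2 / (θ₁ * θ₂) + A) / 2) * ‖Wp‖ ^ 2 := by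
  intro x hx hpos hle W Wt Wp _ rfl htan _
  have hdiff : DifferentiableAt ℝ (fderiv ℝ φ₀) x :=
    ((hφC.contDiffAt (Filter.mem_of_superset (hΩ.mem_nhds hx) subset_closure)).fderiv_right
      le_rfl).differentiableAt one_ne_zero
  have hbound := (hC2 x hx).2.2
  have htangent := hII x hx hpos hle Wt htan
  simp only [fderiv_fderiv_apply_eq hdiff] at hbound htangent ⊢
  have hconcave : fderiv ℝ (fderiv ℝ φ₀) x Wt Wt ≤ -(θ₁ * θ₂) * ‖Wt‖ ^ 2 := by
    nlinarith [hgrad x hx hle, mul_nonneg hθ₂.le (sq_nonneg ‖Wt‖)]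
  calc _ ≤ -(θ₁ * θ₂ / 2) * ‖Wt‖ ^ 2 + (2 * (A / 2) ^ 2 / (θ₁ * θ₂) + A / 2) * ‖Wp‖ ^ 2 :=
        (fderiv ℝ (fderiv ℝ φ₀) x).apply_add_add_le (mul_pos hθ₁ hθ₂) hconcave
          fun u v => (hbound v u).trans_eq (by ring)
    _ = _ := by ring

theorem stmt_18 {n : ℕ} (Ω : Set (EuclideanSpace ℝ (Fin n)))
    (hΩ : IsOpen Ω) (hbd : Bornology.IsBounded Ω)
    (φ₀ : EuclideanSpace ℝ (Fin n) → ℝ) (A δ₀ θ₁ θ₂ : ℝ)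
    (hδ₀ : 0 < δ₀) (hθ₁ : 0 < θ₁) (hθ₂ : 0 < θ₂)
    (hφC : ContDiffOn ℝ 2 φ₀ (closure Ω))
    (hC2 : ∀ x ∈ Ω, |φ₀ x| ≤ A / 2 ∧ ‖gradient φ₀ x‖ ≤ A / 2 ∧
      ∀ v u : EuclideanSpace ℝ (Fin n), |fderiv ℝ (fun y => fderiv ℝ φ₀ y v) x u| ≤ A / 2 * ‖v‖ * ‖u‖)
    (hgrad : ∀ x ∈ Ω, φ₀ x ≤ δ₀ → θ₁ ≤ ‖gradient φ₀ x‖)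
    (hII : ∀ x ∈ Ω, 0 < φ₀ x → φ₀ x ≤ δ₀ → ∀ v : EuclideanSpace ℝ (Fin n),
      ⟪gradient φ₀ x, v⟫ = 0 →
      fderiv ℝ (fun y => fderiv ℝ φ₀ y v) x v ≤ -θ₂ * ‖gradient φ₀ x‖ * ‖v‖ ^ 2) :
    ∀ x ∈ Ω, 0 < φ₀ x → φ₀ x ≤ δ₀ →
      ∀ W Wt Wp : EuclideanSpace ℝ (Fin n), ‖W‖ = 1 → W = Wt + Wp →
        ⟪gradient φ₀ x, Wt⟫ = 0 → (∃ c : ℝ, Wp = c • gradient φ₀ x) →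
        fderiv ℝ (fun y => fderiv ℝ φ₀ y W) x W ≤
          -(θ₁ * θ₂ / 2) * ‖Wt‖ ^ 2 + ((A ^ 2 / (θ₁ * θ₂) + A) / 2) * ‖Wp‖ ^ 2 :=
  stmt_18_general Ω hΩ φ₀ A δ₀ θ₁ θ₂ hθ₁ hθ₂ hφC hC2 hgrad hII
end
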